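/- arXiv:math/0609180 — 3 statements merged into one kernel-verified Lean document; each statement's English description precedes it below -/
import Mathlib

section
/- Let k be a field of characteristic 7. Let A₀ = e₁₂ (the 2×2 matrix unit) and let A₁ = ((a,b),(0,d)) be upper triangular. Then for any 2×2 matrix A₂ with lower-left entry s, we have (A₀A₂)³A₀ = s³ e₁₂ and (ad A₁)⁶(A₀) = (a-d)⁶ e₁₂. -/
theorem stmt_13 {k : Type*} [Field k] [CharP k 7] (a b d s : k)
    (A0 A1 A2 : Matrix (Fin 2) (Fin 2) k)
    (hA0 : A0 = Matrix.single 0 1 (1 : k))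
    (hA1 : A1 = !![a, b; 0, d])
    (hA2 : A2 1 0 = s) :
    (A0 * A2) ^ 3 * A0 = s ^ 3 • Matrix.single 0 1 (1 : k) ∧
    (fun X : Matrix (Fin 2) (Fin 2) k => A1 * X - X * A1)^[6] A0 =
      (a - d) ^ 6 • Matrix.single 0 1 (1 : k) := by
  subst hA0 hA1
  subst hA2
  constructor
  · ext i j
    fin_cases i <;> fin_cases j <;>
      simp [pow_succ, Matrix.mul_apply, Fin.sum_univ_two, Matrix.single,
        Matrix.of_apply] <;> ring
  · set f : Matrix (Fin 2) (Fin 2) k → Matrix (Fin 2) (Fin 2) k :=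
      fun X => !![a, b; 0, d] * X - X * !![a, b; 0, d] with hf
    have key : f (Matrix.single 0 1 (1 : k)) =
        (a - d) • Matrix.single 0 1 (1 : k) := by
      ext i j
      fin_cases i <;> fin_cases j <;>
        simp [hf, Matrix.mul_apply, Fin.sum_univ_two, Matrix.single,
          Matrix.of_apply, Matrix.vecHead, Matrix.vecTail] <;> ring
    have hsmul : ∀ (c : k) (X : Matrix (Fin 2) (Fin 2) k), f (c • X) = c • f X := by
      intro c X
      ext i j
      fin_cases i <;> fin_cases j <;>
        simp [hf, Matrix.mul_apply, Fin.sum_univ_two, Matrix.vecMul, Matrix.vecHead,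
          Matrix.vecTail, dotProduct] <;> ring
    have gen : ∀ n : ℕ, f^[n] (Matrix.single 0 1 (1 : k)) =
        (a - d) ^ n • Matrix.single 0 1 (1 : k) := by
      intro n
      induction n with
      | zero => simp
      | succ n ih =>
        rw [Function.iterate_succ_apply', ih, hsmul, key, smul_smul, pow_succ]
    exact gen 6
end

section
/- Let k be a field of characteristic 2 and let x = e_{1,m+1} + e_{2,m+2} + ... + e_{m,2m} ∈ gl(2m+1, k), and let e ∈ gl(2m+1,k) be the block matrix of type 2^m 1^1 given by ((0,0,I_m),(0,0,0),(0,0,0)) with corner blocks m×m and central block 1×1. Then an invertible matrix g commutes with both e and x if and only if g has block form ((aI_m, y, z),(0, a, 0),(0,0, aI_m)) for some nonzero a ∈ k, y ∈ Mat_{m×1}, z ∈ Mat_{m×m}. Consequently the common centralizer group of e and x has dimension m² + m + 1. -/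
/-!
Write `G = g.natEntry` for the entries of `g` extended by zero to all of `ℕ × ℕ`. Commuting
with `e` and with `x` gives the two shift relations `G i j = G (i+m+1) (j+m+1)` and
`G i j = G (i+m) (j+m)` for `i, j < m`, together with the vanishing of the entries that the
shifts push off the index range. Comparing the two shifts makes the upper-left `m × m` block
Toeplitz; its first column vanishes below the diagonal and its last column above it, so the
block is `a • 1`, and every other entry outside the `y`, `z` blocks is transported to that
block or to a vanishing one. Such a `g` is upper triangular with diagonal `a`, so it is
invertible iff `a ≠ 0`, and `(a, y, z)` is a linear parametrization of the common centralizer.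
-/

/-- `e` of partition type `2^m 1^1` in `gl(2m+1,k)`: block form `((0,0,I_m),(0,0,0),(0,0,0))`
with blocks of sizes `m, 1, m`; entries `(a, a+m+1)` for `a < m`. -/
def eMat (k : Type*) [Field k] (m : ℕ) : Matrix (Fin (2 * m + 1)) (Fin (2 * m + 1)) k :=
  Matrix.of fun p q => if p.val < m ∧ q.val = p.val + m + 1 then 1 else 0

/-- `x = e_{1,m+1} + e_{2,m+2} + ... + e_{m,2m}` in `gl(2m+1,k)`:
entries `(a, a+m)` for `a < m`. -/
def xMat (k : Type*) [Field k] (m : ℕ) : Matrix (Fin (2 * m + 1)) (Fin (2 * m + 1)) k :=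
  Matrix.of fun p q => if p.val < m ∧ q.val = p.val + m then 1 else 0

/-- The matrix of block form `((a·I_m, y, z),(0, a, 0),(0, 0, a·I_m))`, with blocks of sizes
`m, 1, m`; `y` is a column vector and `z` an `m × m` matrix (indexed for convenience by the
full index set; only the entries `y p` for `p < m` and `z p q` for `p < m < q` are used). -/
def gMat (k : Type*) [Field k] (m : ℕ) (a : k) (y : Fin (2 * m + 1) → k)
    (z : Matrix (Fin (2 * m + 1)) (Fin (2 * m + 1)) k) :
    Matrix (Fin (2 * m + 1)) (Fin (2 * m + 1)) k :=
  Matrix.of fun p q =>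
    if p.val < m ∧ q.val = m then y p
    else if p.val < m ∧ m < q.val then z p q
    else if p = q then a else 0

/-- The subspace of matrices commuting with both `e` and `x`. -/
def commSub (k : Type*) [Field k] (m : ℕ) :
    Submodule k (Matrix (Fin (2 * m + 1)) (Fin (2 * m + 1)) k) where
  carrier := {g | g * eMat k m = eMat k m * g ∧ g * xMat k m = xMat k m * g}
  zero_mem' := by simp
  add_mem' := by
    rintro g h ⟨hg1, hg2⟩ ⟨hh1, hh2⟩
    constructor <;> simp [Matrix.add_mul, Matrix.mul_add, hg1, hg2, hh1, hh2]
  smul_mem' := by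
    rintro c g ⟨hg1, hg2⟩
    constructor <;> simp [Matrix.smul_mul, Matrix.mul_smul, hg1, hg2]

namespace Matrix

variable {R : Type*} [NonAssocSemiring R] {n : ℕ}

def natEntry (g : Matrix (Fin n) (Fin n) R) (i j : ℕ) : R :=
  if h : i < n ∧ j < n then g ⟨i, h.1⟩ ⟨j, h.2⟩ else 0

@[simp]
lemma natEntry_val (g : Matrix (Fin n) (Fin n) R) (p q : Fin n) : g.natEntry p q = g p q := by
  simp [natEntry]

lemma natEntry_of_not_lt (g : Matrix (Fin n) (Fin n) R) {i j : ℕ} (h : ¬(i < n ∧ j < n)) :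
    g.natEntry i j = 0 :=
  dif_neg h

variable (R) in
def partialShift (n m s : ℕ) : Matrix (Fin n) (Fin n) R :=
  of fun p q => if p.val < m ∧ q.val = p.val + s then 1 else 0

variable {m s : ℕ}

lemma mul_partialShift_apply (g : Matrix (Fin n) (Fin n) R) (p q : Fin n) :
    (g * partialShift R n m s) p q =
      if s ≤ q.val ∧ q.val - s < m then g.natEntry p (q - s) else 0 := by
  simp only [mul_apply, partialShift, of_apply, mul_ite, mul_one, mul_zero]
  split_ifs with h
  · rw [Fintype.sum_eq_single ⟨q - s, by omega⟩
      fun r hr => if_neg fun h' => hr (Fin.ext (by simp; omega)), if_pos (by simp; omega)]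
    simp [natEntry, show q.val - s < n by omega]
  · exact Finset.sum_eq_zero fun r _ => if_neg (by omega)

lemma partialShift_mul_apply (g : Matrix (Fin n) (Fin n) R) (p q : Fin n) :
    (partialShift R n m s * g) p q = if p.val < m then g.natEntry (p + s) q else 0 := by
  simp only [mul_apply, partialShift, of_apply, ite_mul, one_mul, zero_mul]
  by_cases hp : p.val < m ∧ p.val + s < n
  · rw [Fintype.sum_eq_single ⟨p + s, hp.2⟩
      fun r hr => if_neg fun h' => hr (Fin.ext (by simp; omega))]
    simp [natEntry, hp]
  · rw [Finset.sum_eq_zero fun r _ => if_neg (by omega)]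
    split_ifs with h
    · exact (g.natEntry_of_not_lt (by omega)).symm
    · rfl

variable {g : Matrix (Fin n) (Fin n) R}

lemma natEntry_commute_partialShift (h : Commute g (partialShift R n m s))
    {i j : ℕ} (hi : i < n) (hj : j < n) :
    (if s ≤ j ∧ j - s < m then g.natEntry i (j - s) else 0) =
      if i < m then g.natEntry (i + s) j else 0 := by
  simpa only [mul_partialShift_apply, partialShift_mul_apply] using
    congrFun (congrFun h.eq ⟨i, hi⟩) ⟨j, hj⟩

lemma natEntry_eq_natEntry_add_of_commute
    (h : Commute g (partialShift R n m s)) {i j : ℕ} (hi : i < m)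
    (hj : j < m) (hjs : j + s < n) : g.natEntry i j = g.natEntry (i + s) (j + s) := by
  by_cases hin : i < n
  · simpa [hi, hj] using natEntry_commute_partialShift h hin hjs
  · rw [natEntry_of_not_lt _ (by omega), natEntry_of_not_lt _ (by omega)]

lemma natEntry_eq_zero_of_commute_of_le
    (h : Commute g (partialShift R n m s)) {i j : ℕ} (hi : m ≤ i)
    (hj : j < m) (hjs : j + s < n) : g.natEntry i j = 0 := by
  by_cases hin : i < n
  · simpa [hj, show ¬i < m by omega] using natEntry_commute_partialShift h hin hjs
  · exact natEntry_of_not_lt _ (by omega)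

lemma natEntry_add_eq_zero_of_commute
    (h : Commute g (partialShift R n m s)) {i j : ℕ} (hi : i < m)
    (hj : j < s ∨ m + s ≤ j) : g.natEntry (i + s) j = 0 := by
  by_cases hin : i < n ∧ j < n
  · simpa [hi, show ¬(s ≤ j ∧ j - s < m) by omega] using
      (natEntry_commute_partialShift h hin.1 hin.2).symm
  · exact natEntry_of_not_lt _ (by omega)

end Matrix

open Matrix

section

variable {k : Type*} [Field k] {m : ℕ} {g : Matrix (Fin (2 * m + 1)) (Fin (2 * m + 1)) k}

lemma eMat_eq_partialShift : eMat k m = partialShift k (2 * m + 1) m (m + 1) := rfl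

lemma xMat_eq_partialShift : xMat k m = partialShift k (2 * m + 1) m m := rfl

lemma natEntry_add_add_of_commute (he : Commute g (eMat k m)) (hx : Commute g (xMat k m))
    {i j : ℕ} (t : ℕ) (hi : i + t < m) (hj : j + t < m) :
    g.natEntry (i + t) (j + t) = g.natEntry i j := by
  rw [eMat_eq_partialShift] at he
  induction t with
  | zero => rfl
  | succ t ih =>
    calc g.natEntry (i + (t + 1)) (j + (t + 1))
        = g.natEntry (i + (t + 1) + m) (j + (t + 1) + m) :=
          natEntry_eq_natEntry_add_of_commute hx hi hj (by omega)
      _ = g.natEntry (i + t + (m + 1)) (j + t + (m + 1)) := by congr 1 <;> omega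
      _ = g.natEntry i j :=
          (natEntry_eq_natEntry_add_of_commute he (by omega) (by omega) (by omega)).symm.trans
            (ih (by omega) (by omega))

lemma natEntry_zero_eq_zero_of_commute (he : Commute g (eMat k m)) (hx : Commute g (xMat k m))
    {i : ℕ} (hi₀ : 0 < i) (hi : i < m) : g.natEntry i 0 = 0 := by
  rw [eMat_eq_partialShift] at he
  calc g.natEntry i 0 = g.natEntry (i + m) (0 + m) :=
        natEntry_eq_natEntry_add_of_commute hx hi (by omega) (by omega)
    _ = g.natEntry (i - 1 + (m + 1)) m := by congr 1 <;> omega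
    _ = 0 := natEntry_add_eq_zero_of_commute he (by omega) (by omega)

lemma natEntry_sub_one_eq_zero_of_commute (he : Commute g (eMat k m)) (hx : Commute g (xMat k m))
    {i : ℕ} (hi : i + 1 < m) : g.natEntry i (m - 1) = 0 := by
  rw [eMat_eq_partialShift] at he
  calc g.natEntry i (m - 1) = g.natEntry (i + (m + 1)) (m - 1 + (m + 1)) :=
        natEntry_eq_natEntry_add_of_commute he (by omega) (by omega) (by omega)
    _ = g.natEntry (i + 1 + m) (2 * m) := by congr 1 <;> omega
    _ = 0 := natEntry_add_eq_zero_of_commute hx hi (by omega)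

lemma natEntry_of_commute_of_lt (he : Commute g (eMat k m)) (hx : Commute g (xMat k m))
    {i j : ℕ} (hi : i < m) (hj : j < m) :
    g.natEntry i j = if i = j then g.natEntry m m else 0 := by
  rcases lt_trichotomy i j with hij | rfl | hij
  · rw [if_neg hij.ne, ← natEntry_add_add_of_commute he hx (m - 1 - j) (by omega) (by omega),
      show j + (m - 1 - j) = m - 1 by omega]
    exact natEntry_sub_one_eq_zero_of_commute he hx (by omega)
  · rw [if_pos rfl]
    calc g.natEntry i i = g.natEntry (0 + i) (0 + i) := by rw [zero_add]
      _ = g.natEntry (0 + m) (0 + m) :=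
          (natEntry_add_add_of_commute he hx i (by omega) (by omega)).trans
            (natEntry_eq_natEntry_add_of_commute hx (by omega) (by omega) (by omega))
      _ = g.natEntry m m := by rw [zero_add]
  · rw [if_neg hij.ne']
    calc g.natEntry i j = g.natEntry (i - j + j) (0 + j) := by congr 1 <;> omega
      _ = 0 := (natEntry_add_add_of_commute he hx j (by omega) (by omega)).trans
          (natEntry_zero_eq_zero_of_commute he hx (by omega) (by omega))

lemma natEntry_of_commute (he : Commute g (eMat k m)) (hx : Commute g (xMat k m)) {i j : ℕ}
    (hi : i < 2 * m + 1) (hj : j < 2 * m + 1) (hij : m ≤ i ∨ j < m) :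
    g.natEntry i j = if i = j then g.natEntry m m else 0 := by
  rw [eMat_eq_partialShift] at he
  by_cases him : i < m
  · exact natEntry_of_commute_of_lt he hx him (by omega)
  by_cases hjm : j < m
  · rw [if_neg (by omega), natEntry_eq_zero_of_commute_of_le he (by omega) hjm (by omega)]
  by_cases hi' : i = m
  · rw [hi']
    split_ifs with hij
    · rw [← hij]
    by_cases hj2 : j = 2 * m
    · calc g.natEntry m j = g.natEntry (0 + m) (2 * m) := by rw [zero_add, hj2]
        _ = 0 := natEntry_add_eq_zero_of_commute hx (by omega) (by omega)
    · calc g.natEntry m j = g.natEntry (0 + m) (j - m + m) := by congr 1 <;> omega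
        _ = g.natEntry 0 (j - m) :=
            (natEntry_eq_natEntry_add_of_commute hx (by omega) (by omega) (by omega)).symm
        _ = 0 := by rw [natEntry_of_commute_of_lt he hx (by omega) (by omega), if_neg (by omega)]
  by_cases hj' : j = m
  · rw [if_neg (by omega)]
    calc g.natEntry i j = g.natEntry (i - (m + 1) + (m + 1)) j := by congr 1; omega
      _ = 0 := natEntry_add_eq_zero_of_commute he (by omega) (by omega)
  calc g.natEntry i j = g.natEntry (i - (m + 1) + (m + 1)) (j - (m + 1) + (m + 1)) := by
        congr 1 <;> omega
    _ = g.natEntry (i - (m + 1)) (j - (m + 1)) :=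
        (natEntry_eq_natEntry_add_of_commute he (by omega) (by omega) (by omega)).symm
    _ = if i = j then g.natEntry m m else 0 := by
        rw [natEntry_of_commute_of_lt he hx (by omega) (by omega)]
        simp only [show i - (m + 1) = j - (m + 1) ↔ i = j by omega]

lemma eq_gMat_of_commute (he : Commute g (eMat k m)) (hx : Commute g (xMat k m)) :
    g = gMat k m (g ⟨m, by omega⟩ ⟨m, by omega⟩) (fun p => g p ⟨m, by omega⟩) g := by
  ext p q
  simp only [gMat, of_apply]
  split_ifs with hyq hzq hpq
  · exact congrArg (g p) (Fin.ext hyq.2)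
  · rfl
  all_goals
    rw [← g.natEntry_val p q, natEntry_of_commute he hx p.isLt q.isLt (by omega)]
  · rw [if_pos (congrArg Fin.val hpq)]
    exact g.natEntry_val ⟨m, by omega⟩ ⟨m, by omega⟩
  · rw [if_neg (Fin.val_ne_of_ne hpq)]

lemma gMat_isUpperTriangular (a : k) (y : Fin (2 * m + 1) → k)
    (z : Matrix (Fin (2 * m + 1)) (Fin (2 * m + 1)) k) : (gMat k m a y z).IsUpperTriangular := by
  intro p q (hqp : q < p)
  simp only [gMat, of_apply]
  rw [if_neg (by omega), if_neg (by omega), if_neg hqp.ne']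

lemma gMat_apply_self (a : k) (y : Fin (2 * m + 1) → k)
    (z : Matrix (Fin (2 * m + 1)) (Fin (2 * m + 1)) k) (p : Fin (2 * m + 1)) :
    gMat k m a y z p p = a := by
  simp only [gMat, of_apply]
  rw [if_neg (by omega), if_neg (by omega), if_pos trivial]

lemma det_gMat (a : k) (y : Fin (2 * m + 1) → k)
    (z : Matrix (Fin (2 * m + 1)) (Fin (2 * m + 1)) k) :
    (gMat k m a y z).det = a ^ (2 * m + 1) := by
  rw [det_of_isUpperTriangular (gMat_isUpperTriangular a y z)]
  simp [gMat_apply_self]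

lemma gMat_commute_eMat (a : k) (y : Fin (2 * m + 1) → k)
    (z : Matrix (Fin (2 * m + 1)) (Fin (2 * m + 1)) k) : Commute (gMat k m a y z) (eMat k m) := by
  ext p q
  rw [eMat_eq_partialShift, mul_partialShift_apply, partialShift_mul_apply]
  simp only [natEntry, gMat, of_apply, Fin.ext_iff]
  split_ifs <;> first | rfl | omega

lemma gMat_commute_xMat (a : k) (y : Fin (2 * m + 1) → k)
    (z : Matrix (Fin (2 * m + 1)) (Fin (2 * m + 1)) k) : Commute (gMat k m a y z) (xMat k m) := by
  ext p q
  rw [xMat_eq_partialShift, mul_partialShift_apply, partialShift_mul_apply]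
  simp only [natEntry, gMat, of_apply, Fin.ext_iff]
  split_ifs <;> first | rfl | omega

lemma gMat_congr {a : k} {y y' : Fin (2 * m + 1) → k}
    {z z' : Matrix (Fin (2 * m + 1)) (Fin (2 * m + 1)) k} (hy : ∀ p, p.val < m → y p = y' p)
    (hz : ∀ p q, p.val < m → m < q.val → z p q = z' p q) :
    gMat k m a y z = gMat k m a y' z' := by
  ext p q
  simp only [gMat, of_apply]
  split_ifs with hyq hzq
  exacts [hy p hyq.1, hz p q hzq.1 hzq.2, rfl, rfl]

variable (k m) in
noncomputable def gMatOfParams :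
    (k × (Fin m → k) × Matrix (Fin m) (Fin m) k) →ₗ[k]
      Matrix (Fin (2 * m + 1)) (Fin (2 * m + 1)) k where
  toFun t := gMat k m t.1 (fun p => if h : p.val < m then t.2.1 ⟨p, h⟩ else 0)
    (of fun p q => if h : p.val < m then t.2.2 ⟨p, h⟩ ⟨q - (m + 1), by omega⟩ else 0)
  map_add' t s := by
    ext p q
    simp only [gMat, of_apply, Matrix.add_apply, Prod.fst_add, Prod.snd_add, Pi.add_apply]
    split_ifs <;> simp
  map_smul' c t := by
    ext p q
    simp only [gMat, of_apply, Matrix.smul_apply, Prod.smul_fst, Prod.smul_snd, Pi.smul_apply,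
      RingHom.id_apply, smul_eq_mul]
    split_ifs <;> simp

def readParams (g : Matrix (Fin (2 * m + 1)) (Fin (2 * m + 1)) k) :
    k × (Fin m → k) × Matrix (Fin m) (Fin m) k :=
  (g ⟨m, by omega⟩ ⟨m, by omega⟩, fun i => g ⟨i, by omega⟩ ⟨m, by omega⟩,
    of fun i j => g ⟨i, by omega⟩ ⟨j + (m + 1), by omega⟩)

lemma readParams_gMatOfParams (t : k × (Fin m → k) × Matrix (Fin m) (Fin m) k) :
    readParams (gMatOfParams k m t) = t := by
  obtain ⟨a, y, z⟩ := t
  refine Prod.ext (gMat_apply_self _ _ _ _) (Prod.ext ?_ ?_)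
  · funext i
    simp [readParams, gMatOfParams, gMat]
  · ext i j
    have hj : m < j.val + (m + 1) := by omega
    simp [readParams, gMatOfParams, gMat, hj, hj.ne']

lemma gMatOfParams_readParams (he : Commute g (eMat k m)) (hx : Commute g (xMat k m)) :
    gMatOfParams k m (readParams g) = g := by
  refine (gMat_congr (fun p hp => ?_) fun p q hp hq => ?_).trans
    (eq_gMat_of_commute he hx).symm
  · exact dif_pos hp
  · rw [of_apply, dif_pos hp]
    exact congrArg (g p) (Fin.ext (by simp; omega))

lemma range_gMatOfParams : LinearMap.range (gMatOfParams k m) = commSub k m := by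
  apply le_antisymm
  · rintro _ ⟨t, rfl⟩
    exact ⟨(gMat_commute_eMat _ _ _).eq, (gMat_commute_xMat _ _ _).eq⟩
  · rintro g ⟨he, hx⟩
    exact ⟨readParams g, gMatOfParams_readParams he hx⟩

lemma finrank_commSub : Module.finrank k (commSub k m) = m ^ 2 + m + 1 := by
  rw [← range_gMatOfParams,
    LinearMap.finrank_range_of_inj (Function.LeftInverse.injective readParams_gMatOfParams)]
  simp only [Module.finrank_prod, Module.finrank_self, Module.finrank_fin_fun,
    Module.finrank_matrix, Fintype.card_fin]
  ring

end

theorem stmt_15_general {k : Type*} [Field k] (m : ℕ) :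
    (∀ g : (Matrix (Fin (2 * m + 1)) (Fin (2 * m + 1)) k)ˣ,
      ((↑g : Matrix (Fin (2 * m + 1)) (Fin (2 * m + 1)) k) * eMat k m =
          eMat k m * (↑g : Matrix (Fin (2 * m + 1)) (Fin (2 * m + 1)) k) ∧
        (↑g : Matrix (Fin (2 * m + 1)) (Fin (2 * m + 1)) k) * xMat k m =
          xMat k m * (↑g : Matrix (Fin (2 * m + 1)) (Fin (2 * m + 1)) k)) ↔
      ∃ (a : k) (y : Fin (2 * m + 1) → k)
        (z : Matrix (Fin (2 * m + 1)) (Fin (2 * m + 1)) k),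
        a ≠ 0 ∧ (↑g : Matrix (Fin (2 * m + 1)) (Fin (2 * m + 1)) k) = gMat k m a y z) ∧
    Module.finrank k (commSub k m) = m ^ 2 + m + 1 := by
  refine ⟨fun g => ⟨fun ⟨he, hx⟩ => ?_, ?_⟩, finrank_commSub⟩
  · have hg := eq_gMat_of_commute he hx
    refine ⟨_, _, _, fun ha => ?_, hg⟩
    have hdet := (isUnit_iff_isUnit_det _).mp g.isUnit
    rw [hg, det_gMat, ha, zero_pow (by omega)] at hdet
    exact not_isUnit_zero hdet
  · rintro ⟨a, y, z, -, hg⟩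
    rw [hg]
    exact ⟨gMat_commute_eMat a y z, gMat_commute_xMat a y z⟩

theorem stmt_15 {k : Type*} [Field k] [CharP k 2] (m : ℕ) :
    (∀ g : (Matrix (Fin (2 * m + 1)) (Fin (2 * m + 1)) k)ˣ,
      ((↑g : Matrix (Fin (2 * m + 1)) (Fin (2 * m + 1)) k) * eMat k m =
          eMat k m * (↑g : Matrix (Fin (2 * m + 1)) (Fin (2 * m + 1)) k) ∧
        (↑g : Matrix (Fin (2 * m + 1)) (Fin (2 * m + 1)) k) * xMat k m =
          xMat k m * (↑g : Matrix (Fin (2 * m + 1)) (Fin (2 * m + 1)) k)) ↔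
      ∃ (a : k) (y : Fin (2 * m + 1) → k)
        (z : Matrix (Fin (2 * m + 1)) (Fin (2 * m + 1)) k),
        a ≠ 0 ∧ (↑g : Matrix (Fin (2 * m + 1)) (Fin (2 * m + 1)) k) = gMat k m a y z) ∧
    Module.finrank k (commSub k m) = m ^ 2 + m + 1 :=
  stmt_15_general m
end

section
/- Let k be a field of characteristic 2 and let e, x ∈ gl(2m+1,k) be as follows: e of block form ((0,0,I_m),(0,0,0),(0,0,0)) and x = e_{1,m+1} + ... + e_{m,2m}. Then the only idempotent matrices commuting with both e and x are 0 and the identity. Hence the (2m+1)-dimensional module over k[X,Y]/(X²,Y²) on which X acts by e and Y acts by x is indecomposable. -/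
section helpers

variable {k : Type*} [Field k] {m : ℕ}

/-- Entries of a `(2m+1)×(2m+1)` matrix, indexed by natural numbers (0 outside range). -/
def Gaux (g : Matrix (Fin (2*m+1)) (Fin (2*m+1)) k) (i j : ℕ) : k :=
  if h : i < 2*m+1 ∧ j < 2*m+1 then g ⟨i, h.1⟩ ⟨j, h.2⟩ else 0

lemma Gfun_eq (g : Matrix (Fin (2*m+1)) (Fin (2*m+1)) k) (p q : Fin (2*m+1)) :
    g p q = Gaux g p.val q.val := by
  unfold Gaux
  rw [dif_pos ⟨p.isLt, q.isLt⟩]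

lemma ge_apply (g : Matrix (Fin (2*m+1)) (Fin (2*m+1)) k) (p q : Fin (2*m+1)) :
    (g * eMat k m) p q =
      if h : m+1 ≤ q.val then g p ⟨q.val-(m+1), by omega⟩ else 0 := by
  have hq := q.isLt
  rw [Matrix.mul_apply]
  by_cases h : m+1 ≤ q.val
  · rw [dif_pos h, Finset.sum_eq_single (⟨q.val-(m+1), by omega⟩ : Fin (2*m+1))]
    · rw [show eMat k m ⟨q.val-(m+1), by omega⟩ q = 1 from
        if_pos (show q.val-(m+1) < m ∧ q.val = q.val-(m+1)+m+1 by omega), mul_one]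
    · intro r _ hr
      rw [show eMat k m r q = 0 from if_neg ?_, mul_zero]
      rintro ⟨h1, h2⟩
      exact hr (Fin.ext (show r.val = q.val-(m+1) by omega))
    · intro hmem; exact absurd (Finset.mem_univ _) hmem
  · rw [dif_neg h]
    apply Finset.sum_eq_zero
    intro r _
    rw [show eMat k m r q = 0 from if_neg (by rintro ⟨h1, h2⟩; omega), mul_zero]

lemma eg_apply (g : Matrix (Fin (2*m+1)) (Fin (2*m+1)) k) (p q : Fin (2*m+1)) :
    (eMat k m * g) p q =
      if h : p.val < m then g ⟨p.val+m+1, by omega⟩ q else 0 := by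
  rw [Matrix.mul_apply]
  by_cases h : p.val < m
  · rw [dif_pos h, Finset.sum_eq_single (⟨p.val+m+1, by omega⟩ : Fin (2*m+1))]
    · rw [show eMat k m p ⟨p.val+m+1, by omega⟩ = 1 from
        if_pos (show p.val < m ∧ p.val+m+1 = p.val+m+1 from ⟨h, rfl⟩), one_mul]
    · intro r _ hr
      rw [show eMat k m p r = 0 from if_neg ?_, zero_mul]
      rintro ⟨h1, h2⟩
      exact hr (Fin.ext (show r.val = p.val+m+1 from h2))
    · intro hmem; exact absurd (Finset.mem_univ _) hmem
  · rw [dif_neg h]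
    apply Finset.sum_eq_zero
    intro r _
    rw [show eMat k m p r = 0 from if_neg (by rintro ⟨h1, h2⟩; omega), zero_mul]

lemma gx_apply (g : Matrix (Fin (2*m+1)) (Fin (2*m+1)) k) (p q : Fin (2*m+1)) :
    (g * xMat k m) p q =
      if h : m ≤ q.val ∧ q.val < 2*m then g p ⟨q.val-m, by omega⟩ else 0 := by
  rw [Matrix.mul_apply]
  by_cases h : m ≤ q.val ∧ q.val < 2*m
  · rw [dif_pos h, Finset.sum_eq_single (⟨q.val-m, by omega⟩ : Fin (2*m+1))]
    · rw [show xMat k m ⟨q.val-m, by omega⟩ q = 1 from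
        if_pos (show q.val-m < m ∧ q.val = q.val-m+m by omega), mul_one]
    · intro r _ hr
      rw [show xMat k m r q = 0 from if_neg ?_, mul_zero]
      rintro ⟨h1, h2⟩
      exact hr (Fin.ext (show r.val = q.val-m by omega))
    · intro hmem; exact absurd (Finset.mem_univ _) hmem
  · rw [dif_neg h]
    apply Finset.sum_eq_zero
    intro r _
    rw [show xMat k m r q = 0 from if_neg (by rintro ⟨h1, h2⟩; omega), mul_zero]

lemma xg_apply (g : Matrix (Fin (2*m+1)) (Fin (2*m+1)) k) (p q : Fin (2*m+1)) :
    (xMat k m * g) p q =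
      if h : p.val < m then g ⟨p.val+m, by omega⟩ q else 0 := by
  rw [Matrix.mul_apply]
  by_cases h : p.val < m
  · rw [dif_pos h, Finset.sum_eq_single (⟨p.val+m, by omega⟩ : Fin (2*m+1))]
    · rw [show xMat k m p ⟨p.val+m, by omega⟩ = 1 from
        if_pos (show p.val < m ∧ p.val+m = p.val+m from ⟨h, rfl⟩), one_mul]
    · intro r _ hr
      rw [show xMat k m p r = 0 from if_neg ?_, zero_mul]
      rintro ⟨h1, h2⟩
      exact hr (Fin.ext (show r.val = p.val+m from h2))
    · intro hmem; exact absurd (Finset.mem_univ _) hmem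
  · rw [dif_neg h]
    apply Finset.sum_eq_zero
    intro r _
    rw [show xMat k m p r = 0 from if_neg (by rintro ⟨h1, h2⟩; omega), zero_mul]

end helpers

/-- The only idempotents commuting with both `e` and `x` are `0` and `1`; hence the
corresponding `k[X,Y]/(X²,Y²)`-module is indecomposable. -/
theorem stmt_16 {k : Type*} [Field k] [CharP k 2] (m : ℕ)
    (g : Matrix (Fin (2 * m + 1)) (Fin (2 * m + 1)) k)
    (hg : g * g = g)
    (hge : g * eMat k m = eMat k m * g)
    (hgx : g * xMat k m = xMat k m * g) :
    g = 0 ∨ g = 1 := by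
  have hE : ∀ p q : Fin (2*m+1),
      (if h : m+1 ≤ q.val then g p ⟨q.val-(m+1), by omega⟩ else 0) =
      (if h : p.val < m then g ⟨p.val+m+1, by omega⟩ q else 0) := by
    intro p q
    rw [← ge_apply, ← eg_apply, hge]
  have hX : ∀ p q : Fin (2*m+1),
      (if h : m ≤ q.val ∧ q.val < 2*m then g p ⟨q.val-m, by omega⟩ else 0) =
      (if h : p.val < m then g ⟨p.val+m, by omega⟩ q else 0) := by
    intro p q
    rw [← gx_apply, ← xg_apply, hgx]
  have E1 : ∀ a b, a < m → b < m → Gaux g a b = Gaux g (a+m+1) (b+m+1) := by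
    intro a b ha hb
    have h := hE ⟨a, by omega⟩ ⟨b+m+1, by omega⟩
    rw [dif_pos (show m+1 ≤ b+m+1 by omega), dif_pos (show a < m from ha)] at h
    rw [Gfun_eq g, Gfun_eq g] at h
    simp at h
    convert h using 2
  have X1 : ∀ a b, a < m → b < m → Gaux g a b = Gaux g (a+m) (b+m) := by
    intro a b ha hb
    have h := hX ⟨a, by omega⟩ ⟨b+m, by omega⟩
    rw [dif_pos (show m ≤ b+m ∧ b+m < 2*m by omega), dif_pos (show a < m from ha)] at h
    rw [Gfun_eq g, Gfun_eq g] at h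
    simp at h
    convert h using 2
  have Z1 : ∀ i j, m+1 ≤ i → i < 2*m+1 → j ≤ m → Gaux g i j = 0 := by
    intro i j hi1 hi2 hj
    have h := hE ⟨i-(m+1), by omega⟩ ⟨j, by omega⟩
    rw [dif_neg (show ¬(m+1 ≤ j) by omega), dif_pos (show i-(m+1) < m by omega)] at h
    rw [Gfun_eq g] at h
    simp at h
    rw [show i = i-(m+1)+m+1 by omega]
    exact h.symm
  have Z2 : ∀ i j, m ≤ i → i < 2*m → (j < m ∨ j = 2*m) → j < 2*m+1 → Gaux g i j = 0 := by
    intro i j hi1 hi2 hj hj2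
    have h := hX ⟨i-m, by omega⟩ ⟨j, by omega⟩
    rw [dif_neg (show ¬(m ≤ j ∧ j < 2*m) by omega), dif_pos (show i-m < m by omega)] at h
    rw [Gfun_eq g] at h
    simp at h
    rw [show i = i-m+m by omega]
    exact h.symm
  have step : ∀ a b, a+1 < m → b+1 < m → Gaux g (a+1) (b+1) = Gaux g a b := by
    intro a b ha hb
    have h1 := X1 (a+1) (b+1) ha hb
    have h2 := E1 a b (by omega) (by omega)
    rw [show a+1+m = a+m+1 by omega, show b+1+m = b+m+1 by omega] at h1
    rw [h1, ← h2]
  have hshift : ∀ s a b, a+s < m → b+s < m → Gaux g (a+s) (b+s) = Gaux g a b := by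
    intro s
    induction s with
    | zero => intro a b _ _; rfl
    | succ t ih =>
      intro a b ha hb
      rw [show a+(t+1) = (a+t)+1 by omega, show b+(t+1) = (b+t)+1 by omega]
      rw [step (a+t) (b+t) (by omega) (by omega)]
      exact ih a b (by omega) (by omega)
  have hdiagA : ∀ a, a < m → Gaux g a a = Gaux g 0 0 := by
    intro a ha
    have := hshift a 0 0 (by omega) (by omega)
    simpa using this
  have hoffA : ∀ a b, a < m → b < m → a ≠ b → Gaux g a b = 0 := by
    intro a b ha hb hab
    rcases Nat.lt_or_ge a b with h | h
    · have h1 := hshift (m-1-b) a b (by omega) (by omega)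
      have h2 := E1 (a+(m-1-b)) (b+(m-1-b)) (by omega) (by omega)
      have h3 := Z2 (a+(m-1-b)+m+1) (b+(m-1-b)+m+1) (by omega) (by omega)
        (by right; omega) (by omega)
      rw [← h2, h1] at h3
      exact h3
    · have hba : b < a := by omega
      have h1 := hshift b (a-b) 0 (by omega) (by omega)
      rw [show a-b+b = a by omega, show 0+b = b by omega] at h1
      have h2 := X1 (a-b) 0 (by omega) (by omega)
      have h3 := Z1 (a-b+m) (0+m) (by omega) (by omega) (by omega)
      rw [h1, h2]
      exact h3
  have hdiag : ∀ i, i < 2*m+1 → Gaux g i i = Gaux g 0 0 := by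
    intro i hi
    rcases Nat.lt_or_ge i m with h | h
    · exact hdiagA i h
    · rcases Nat.eq_or_lt_of_le h with h' | h'
      · rcases Nat.eq_zero_or_pos m with hm | hm
        · subst hm; rw [← h']
        · have := X1 0 0 hm hm
          simp at this
          rw [← h', ← this]
      · have h2 := E1 (i-m-1) (i-m-1) (by omega) (by omega)
        rw [show i-m-1+m+1 = i by omega] at h2
        rw [← h2]
        exact hdiagA (i-m-1) (by omega)
  have hoff : ∀ i j, i < 2*m+1 → j < 2*m+1 → i ≠ j → ¬(i < m ∧ m ≤ j) → Gaux g i j = 0 := by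
    intro i j hi hj hij hC
    by_cases h1 : i < m
    · have hjm : j < m := by
        by_contra h
        exact hC ⟨h1, by omega⟩
      exact hoffA i j h1 hjm hij
    · push_neg at h1
      by_cases h2 : j < m
      · rcases Nat.lt_or_ge i (2*m) with h3 | h3
        · exact Z2 i j h1 h3 (Or.inl h2) hj
        · exact Z1 i j (by omega) hi (by omega)
      · push_neg at h2
        rcases Nat.eq_or_lt_of_le h2 with h2' | h2'
        · exact Z1 i j (by omega) hi (by omega)
        · rcases Nat.eq_or_lt_of_le h1 with h1' | h1'
          · rcases Nat.lt_or_ge j (2*m) with h4 | h4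
            · have h5 := X1 0 (j-m) (by omega) (by omega)
              simp at h5
              rw [show j-m+m = j by omega] at h5
              rw [← h1', ← h5]
              exact hoffA 0 (j-m) (by omega) (by omega) (by omega)
            · exact Z2 i j h1 (by omega) (by right; omega) hj
          · have h5 := E1 (i-m-1) (j-m-1) (by omega) (by omega)
            rw [show i-m-1+m+1 = i by omega, show j-m-1+m+1 = j by omega] at h5
            rw [← h5]
            exact hoffA (i-m-1) (j-m-1) (by omega) (by omega) (by omega)
  have hcc : Gaux g 0 0 * Gaux g 0 0 = Gaux g 0 0 := by
    have h := congrFun (congrFun hg ⟨0, by omega⟩) ⟨0, by omega⟩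
    rw [Matrix.mul_apply] at h
    rw [Finset.sum_eq_single (⟨0, by omega⟩ : Fin (2*m+1))] at h
    · rw [Gfun_eq g] at h
      simpa using h
    · intro r _ hr
      have h0 : g r ⟨0, by omega⟩ = 0 := by
        rw [Gfun_eq g r ⟨0, by omega⟩]
        exact hoff r.val 0 r.isLt (by omega) (fun hcon => hr (Fin.ext hcon)) (by omega)
      rw [h0, mul_zero]
    · intro hmem; exact absurd (Finset.mem_univ _) hmem
  have hC : ∀ i j, i < m → m ≤ j → j < 2*m+1 → Gaux g i j = 0 := by
    intro i j hi hjm hj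
    have hpq : (⟨i, by omega⟩ : Fin (2*m+1)) ≠ ⟨j, by omega⟩ := by
      simp [Fin.ext_iff]; omega
    have h := congrFun (congrFun hg ⟨i, by omega⟩) ⟨j, by omega⟩
    rw [Matrix.mul_apply] at h
    rw [Fintype.sum_eq_add_sum_compl (⟨i, by omega⟩ : Fin (2*m+1))] at h
    rw [Finset.sum_eq_single_of_mem (⟨j, by omega⟩ : Fin (2*m+1))
      (Finset.mem_compl.mpr (by simpa using hpq.symm))] at h
    · simp only [Gfun_eq g, Fin.val_mk] at h
      rw [hdiag i (by omega), hdiag j hj] at h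
      have h2 : Gaux g 0 0 + Gaux g 0 0 = 0 := by
        have h3 : ((2 : ℕ) : k) = 0 := by exact_mod_cast CharP.cast_eq_zero k 2
        calc Gaux g 0 0 + Gaux g 0 0 = ((2:ℕ):k) * Gaux g 0 0 := by push_cast; ring
        _ = 0 := by rw [h3, zero_mul]
      linear_combination Gaux g i j * h2 - h
    · intro r hr hrq
      have hrp : r ≠ (⟨i, by omega⟩ : Fin (2*m+1)) := by simpa using hr
      rcases Nat.lt_or_ge r.val m with h4 | h4
      · rw [Gfun_eq g]
        have : Gaux g i r.val = 0 := by
          apply hoff i r.val (by omega) r.isLt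
          · intro hcon
            exact hrp (Fin.ext (by simpa using hcon.symm))
          · omega
        simp only [Fin.val_mk]
        rw [this, zero_mul]
      · rw [Gfun_eq g r]
        have : Gaux g r.val j = 0 := by
          apply hoff r.val j r.isLt hj
          · intro hcon
            exact hrq (Fin.ext (by simpa using hcon))
          · omega
        simp only [Fin.val_mk]
        rw [this, mul_zero]
  have hfin : ∀ p q : Fin (2*m+1), g p q = if p = q then Gaux g 0 0 else 0 := by
    intro p q
    by_cases hpq : p = q
    · subst hpq
      rw [if_pos rfl, Gfun_eq g]
      exact hdiag p.val p.isLt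
    · rw [if_neg hpq, Gfun_eq g]
      by_cases hc2 : p.val < m ∧ m ≤ q.val
      · exact hC p.val q.val hc2.1 hc2.2 q.isLt
      · exact hoff p.val q.val p.isLt q.isLt (fun h => hpq (Fin.ext h)) hc2
  have hc01 : Gaux g 0 0 = 0 ∨ Gaux g 0 0 = 1 := by
    rcases eq_or_ne (Gaux g 0 0) 0 with h | h
    · exact Or.inl h
    · right
      have h2 : Gaux g 0 0 * Gaux g 0 0 = Gaux g 0 0 * 1 := by rw [mul_one]; exact hcc
      exact mul_left_cancel₀ h h2
  rcases hc01 with h | h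
  · left
    ext p q
    rw [hfin, h]
    simp
  · right
    ext p q
    rw [hfin, h, Matrix.one_apply]
end
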